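/- Let G be a regular distribution function and H a distribution function that is regular and strictly tail-equivalent to G. Then sup_{x ∈ ℝ} |G(x)^n − H(x)^n| → 0 as n → ∞. -/

import Mathlib

open Filter Topology Classical

/-- A distribution function: nondecreasing, right-continuous, limits 0 and 1. -/
def IsDistFun (G : ℝ → ℝ) : Prop :=
  Monotone G ∧ (∀ x, ContinuousWithinAt G (Set.Ici x) x) ∧
    Tendsto G atBot (𝓝 0) ∧ Tendsto G atTop (𝓝 1)

/-- The filter of approach to the right endpoint `G_* = sup {x : G x < 1}` from the left
(`atTop` if the endpoint is `+∞`). -/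
noncomputable def endFilter (G : ℝ → ℝ) : Filter ℝ :=
  if BddAbove {x | G x < 1} then 𝓝[<] (sSup {x | G x < 1}) else atTop

/-- Regularity in the sense of O'Brien: `G(G_*−) = 1` and `(1−G(x−))/(1−G(x)) → 1`
as `x → G_*−`. -/
def RegularDF (G : ℝ → ℝ) : Prop :=
  Tendsto G (endFilter G) (𝓝 1) ∧
  Tendsto (fun x => (1 - Function.leftLim G x) / (1 - G x)) (endFilter G) (𝓝 1)

/-- Strict tail-equivalence: same right endpoint and `(1−H(x))/(1−G(x)) → 1` at the endpoint. -/
def StrictTailEquiv (G H : ℝ → ℝ) : Prop :=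
  (BddAbove {x | G x < 1} ↔ BddAbove {x | H x < 1}) ∧
  sSup {x | G x < 1} = sSup {x | H x < 1} ∧
  Tendsto (fun x => (1 - H x) / (1 - G x)) (endFilter G) (𝓝 1)

/- The hypothesis `(1 - H)/(1 - G) → 1` says that `|G - H| ≤ δ (1 - G)` near the common right
endpoint, and the identity `a^n - b^n = (a - b) Σ aᵏ bⁿ⁻¹⁻ᵏ` together with `n cⁿ⁻¹ (1 - c) ≤ 1`
on `[0, 1]` turns this into `|Gⁿ - Hⁿ| ≤ 2δ` there, uniformly in `n`. Away from the endpoint both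
`G` and `H` stay below some `r < 1`, so there `|Gⁿ - Hⁿ| ≤ rⁿ → 0`. Right-continuity and the common
endpoint make `G < 1` and `H < 1` hold at exactly the same points, so beyond the endpoint
`G = H = 1`. -/

lemma natCast_mul_pow_pred_mul_one_sub_le_one {c : ℝ} (hc0 : 0 ≤ c) (hc1 : c ≤ 1) (n : ℕ) :
    n * c ^ (n - 1) * (1 - c) ≤ 1 := by
  have hsum : (n : ℝ) * c ^ (n - 1) ≤ ∑ i ∈ Finset.range n, c ^ i := by
    simpa using Finset.card_nsmul_le_sum (Finset.range n) (c ^ ·) (c ^ (n - 1)) fun i hi =>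
      pow_le_pow_of_le_one hc0 hc1 (by simp only [Finset.mem_range] at hi; omega)
  calc n * c ^ (n - 1) * (1 - c) ≤ (1 - c) * ∑ i ∈ Finset.range n, c ^ i := by nlinarith
    _ = 1 - c ^ n := mul_neg_geom_sum c n
    _ ≤ 1 := by linarith [pow_nonneg hc0 n]

lemma abs_pow_sub_pow_le_of_abs_sub_le_mul_one_sub {a b δ : ℝ} (ha0 : 0 ≤ a) (ha1 : a ≤ 1)
    (hb0 : 0 ≤ b) (hb1 : b ≤ 1) (hδ0 : 0 ≤ δ) (hδ : δ ≤ 1 / 2) (hab : |a - b| ≤ δ * (1 - a))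
    (n : ℕ) : |a ^ n - b ^ n| ≤ 2 * δ := by
  set c := max a b with hc
  have hc0 : 0 ≤ c := le_max_of_le_left ha0
  have hc1 : c ≤ 1 := max_le ha1 hb1
  have h1b : 1 - a ≤ 2 * (1 - b) := by
    nlinarith [(le_abs_self (b - a)).trans (abs_sub_comm a b ▸ hab)]
  have h1c : 1 - a ≤ 2 * (1 - c) := by
    rcases max_cases a b with ⟨hmax, -⟩ | ⟨hmax, -⟩ <;> rw [hc, hmax] <;> linarith
  have hab' : |a - b| ≤ 2 * δ * (1 - c) := by nlinarith
  calc |a ^ n - b ^ n| ≤ |a - b| * n * c ^ (n - 1) := by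
        simpa only [abs_of_nonneg ha0, abs_of_nonneg hb0] using abs_pow_sub_pow_le a b n
    _ ≤ 2 * δ * (1 - c) * n * c ^ (n - 1) := by gcongr
    _ = 2 * δ * (n * c ^ (n - 1) * (1 - c)) := by ring
    _ ≤ 2 * δ := mul_le_of_le_one_right (by positivity)
          (natCast_mul_pow_pred_mul_one_sub_le_one hc0 hc1 n)

lemma abs_pow_sub_pow_le_pow_of_le {a b r : ℝ} (ha0 : 0 ≤ a) (har : a ≤ r) (hb0 : 0 ≤ b)
    (hbr : b ≤ r) (n : ℕ) : |a ^ n - b ^ n| ≤ r ^ n :=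
  abs_sub_le_of_nonneg_of_le (pow_nonneg ha0 n) (pow_le_pow_left₀ ha0 har n) (pow_nonneg hb0 n)
    (pow_le_pow_left₀ hb0 hbr n)

lemma tendsto_iSup_nhds_zero_of_eventually_forall_le {ι α : Type*} {l : Filter α}
    {f : α → ι → ℝ} (hf : ∀ a i, 0 ≤ f a i) (h : ∀ ε > 0, ∀ᶠ a in l, ∀ i, f a i ≤ ε) :
    Tendsto (fun a => ⨆ i, f a i) l (𝓝 0) := by
  rw [Metric.tendsto_nhds]
  intro ε hε
  filter_upwards [h (ε / 2) (half_pos hε)] with a ha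
  rw [Real.dist_0_eq_abs, abs_of_nonneg (Real.iSup_nonneg (hf a))]
  exact (Real.iSup_le ha (half_pos hε).le).trans_lt (half_lt_self hε)

lemma Monotone.setOf_lt_eq_univ_of_not_bddAbove {α β : Type*} [LinearOrder α] [Preorder β]
    {f : α → β} (hf : Monotone f) {c : β} (hb : ¬BddAbove {x | f x < c}) :
    {x | f x < c} = Set.univ := by
  refine Set.eq_univ_of_forall fun x => ?_
  obtain ⟨y, hy, hxy⟩ := not_bddAbove_iff.1 hb x
  exact (hf hxy.le).trans_lt hy

namespace IsDistFun

variable {G : ℝ → ℝ}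

lemma nonneg (hG : IsDistFun G) (x : ℝ) : 0 ≤ G x :=
  le_of_tendsto hG.2.2.1 (eventually_atBot.2 ⟨x, fun _ hy => hG.1 hy⟩)

lemma le_one (hG : IsDistFun G) (x : ℝ) : G x ≤ 1 :=
  ge_of_tendsto hG.2.2.2 (eventually_atTop.2 ⟨x, fun _ hy => hG.1 hy⟩)

/-- Right-continuity makes `{x | G x < 1}` open on the right. -/
lemma setOf_lt_one_eq_Iio (hG : IsDistFun G) (hb : BddAbove {x | G x < 1}) :
    {x | G x < 1} = Set.Iio (sSup {x | G x < 1}) := by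
  ext x
  constructor
  · intro hx
    have hright : ∀ᶠ y in 𝓝[>] x, G y < 1 :=
      ((hG.2.1 x).mono_left (nhdsWithin_mono _ Set.Ioi_subset_Ici_self)).eventually
        (gt_mem_nhds hx)
    obtain ⟨y, hy, hxy⟩ := (hright.and self_mem_nhdsWithin).exists
    exact hxy.trans_le (le_csSup hb hy)
  · intro hx
    have hne : {x | G x < 1}.Nonempty := (hG.2.2.1.eventually (gt_mem_nhds one_pos)).exists
    obtain ⟨y, hy, hxy⟩ := exists_lt_of_lt_csSup hne hx
    exact (hG.1 hxy.le).trans_lt hy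

lemma exists_lt_one_forall_gt_of_eventually_endFilter (hG : IsDistFun G) {P : ℝ → Prop}
    (hP : ∀ᶠ x in endFilter G, P x) : ∃ x₀, G x₀ < 1 ∧ ∀ x, x₀ < x → G x < 1 → P x := by
  by_cases hb : BddAbove {x | G x < 1}
  · rw [endFilter, if_pos hb] at hP
    obtain ⟨x₀, hx₀, hsub⟩ := mem_nhdsLT_iff_exists_Ioo_subset.1 hP
    have hS := hG.setOf_lt_one_eq_Iio hb
    exact ⟨x₀, hS.ge hx₀, fun x hx hGx => hsub ⟨hx, hS.le hGx⟩⟩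
  · rw [endFilter, if_neg hb] at hP
    obtain ⟨x₀, hx₀⟩ := eventually_atTop.1 hP
    exact ⟨x₀, (hG.1.setOf_lt_eq_univ_of_not_bddAbove hb).ge (Set.mem_univ x₀), fun x hx _ => hx₀ x hx.le⟩

end IsDistFun

namespace StrictTailEquiv

variable {G H : ℝ → ℝ}

lemma setOf_lt_one_eq (hG : IsDistFun G) (hH : IsDistFun H) (hte : StrictTailEquiv G H) :
    {x | G x < 1} = {x | H x < 1} := by
  by_cases hb : BddAbove {x | G x < 1}
  · rw [hG.setOf_lt_one_eq_Iio hb, hH.setOf_lt_one_eq_Iio (hte.1.1 hb), hte.2.1]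
  · rw [hG.1.setOf_lt_eq_univ_of_not_bddAbove hb,
      hH.1.setOf_lt_eq_univ_of_not_bddAbove (mt hte.1.2 hb)]

lemma exists_forall_gt_abs_sub_le_mul_one_sub (hG : IsDistFun G) (hH : IsDistFun H)
    (hte : StrictTailEquiv G H) {δ : ℝ} (hδ : 0 < δ) :
    ∃ x₀, G x₀ < 1 ∧ ∀ x, x₀ < x → |G x - H x| ≤ δ * (1 - G x) := by
  have hratio : ∀ᶠ x in endFilter G, |(1 - H x) / (1 - G x) - 1| ≤ δ :=
    (Metric.tendsto_nhds.1 hte.2.2 δ hδ).mono fun x hx => hx.le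
  obtain ⟨x₀, hx₀, htail⟩ := hG.exists_lt_one_forall_gt_of_eventually_endFilter hratio
  refine ⟨x₀, hx₀, fun x hx => ?_⟩
  by_cases hGx : G x < 1
  · have hpos : 0 < 1 - G x := sub_pos.2 hGx
    have := htail x hx hGx
    rwa [div_sub_one hpos.ne', sub_sub_sub_cancel_left, abs_div, abs_of_pos hpos,
      div_le_iff₀ hpos] at this
  · have hHx : ¬H x < 1 := fun h => hGx ((hte.setOf_lt_one_eq hG hH).ge h)
    have hG1 : G x = 1 := le_antisymm (hG.le_one x) (not_lt.1 hGx)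
    have hH1 : H x = 1 := le_antisymm (hH.le_one x) (not_lt.1 hHx)
    simp [hG1, hH1]

lemma eventually_forall_abs_pow_sub_pow_le (hG : IsDistFun G) (hH : IsDistFun H)
    (hte : StrictTailEquiv G H) {ε : ℝ} (hε : 0 < ε) :
    ∀ᶠ n : ℕ in atTop, ∀ x, |G x ^ n - H x ^ n| ≤ ε := by
  set δ := min (ε / 2) (1 / 2)
  have hδ0 : 0 < δ := lt_min (half_pos hε) one_half_pos
  obtain ⟨x₀, hx₀, htail⟩ := hte.exists_forall_gt_abs_sub_le_mul_one_sub hG hH hδ0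
  set r := max (G x₀) (H x₀)
  have hr0 : 0 ≤ r := (hG.nonneg x₀).trans (le_max_left _ _)
  have hr1 : r < 1 := max_lt hx₀ ((hte.setOf_lt_one_eq hG hH).le hx₀)
  have hrn : ∀ᶠ n : ℕ in atTop, r ^ n ≤ ε :=
    (tendsto_pow_atTop_nhds_zero_of_lt_one hr0 hr1).eventually (ge_mem_nhds hε)
  filter_upwards [hrn] with n hn x
  rcases le_or_gt x x₀ with hx | hx
  · exact (abs_pow_sub_pow_le_pow_of_le (hG.nonneg x) ((hG.1 hx).trans (le_max_left _ _))
      (hH.nonneg x) ((hH.1 hx).trans (le_max_right _ _)) n).trans hn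
  calc |G x ^ n - H x ^ n| ≤ 2 * δ :=
        abs_pow_sub_pow_le_of_abs_sub_le_mul_one_sub (hG.nonneg x) (hG.le_one x) (hH.nonneg x)
          (hH.le_one x) hδ0.le (min_le_right _ _) (htail x hx) n
    _ ≤ ε := by linarith [min_le_left (ε / 2) (1 / 2)]

end StrictTailEquiv

theorem stmt2_general (G H : ℝ → ℝ) (hG : IsDistFun G)
    (hH : IsDistFun H) (hte : StrictTailEquiv G H) :
    Tendsto (fun n : ℕ => ⨆ x : ℝ, |G x ^ n - H x ^ n|) atTop (𝓝 0) :=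
  tendsto_iSup_nhds_zero_of_eventually_forall_le (fun _ _ => abs_nonneg _)
    fun _ hε => hte.eventually_forall_abs_pow_sub_pow_le hG hH hε

theorem stmt2 (G H : ℝ → ℝ) (hG : IsDistFun G) (hGreg : RegularDF G)
    (hH : IsDistFun H) (hHreg : RegularDF H) (hte : StrictTailEquiv G H) :
    Tendsto (fun n : ℕ => ⨆ x : ℝ, |G x ^ n - H x ^ n|) atTop (𝓝 0) :=
  stmt2_general G H hG hH hte
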